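/- Assume in addition 2/3 < γ ≤ 4/3. Let φ(t,x) := t^{2/γ−1} ψ(t,x) be the renormalized solution. Then for every multi-index α ∈ ℕ³ and every t ∈ (0, t₀], the renormalized energy G_α(t) := (1/2) ∫_{[0,1]³} [ t^{4/(3γ)} (∂_t∂_x^α φ)²(t,x) + Σ_{i=1}^{3} (∂_{x_i}∂_x^α φ)²(t,x) ] dx satisfies G_α(t) ≤ G_α(t₀). -/

import Mathlib

/-!
Put `φ = t^{2/γ-1} ψ`. Then `φ` solves `φ_tt + (2 - 2/γ) t⁻¹ φ_t - t^{-4/(3γ)} Δφ = 0`, whose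
coefficients do not depend on `x`, so every `∂_x^α φ` solves it as well. For a smooth `ℤ³`-periodic
solution `F` of `F_tt + b t⁻¹ F_t - t^{-a} ΔF = 0`, differentiating
`E(t) = ½ ∫ (t^a F_t² + |∇F|²)` and integrating the spatial terms by parts over the cube (the
boundary terms cancel by periodicity) gives `E'(t) = (a/2 - b) t^{a-1} ∫ F_t²`, which is
nonnegative when `2b ≤ a`; for `a = 4/(3γ)`, `b = 2 - 2/γ` this is `γ ≤ 4/3`.
-/

noncomputable section

open MeasureTheory Filter Set

/-- Spatial partial derivative `∂_{x_i}` in the `i`-th coordinate direction. -/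
def pd (i : Fin 3) (f : (Fin 3 → ℝ) → ℝ) (x : Fin 3 → ℝ) : ℝ :=
  deriv (fun s => f (Function.update x i s)) (x i)

/-- Iterated spatial derivative `∂_x^α` for a multi-index `α ∈ ℕ³`. -/
def pdMulti (α : Fin 3 → ℕ) (f : (Fin 3 → ℝ) → ℝ) : (Fin 3 → ℝ) → ℝ :=
  (pd 0)^[α 0] ((pd 1)^[α 1] ((pd 2)^[α 2] f))

/-- Time derivative `∂_t`. -/
def dtd (ψ : ℝ → (Fin 3 → ℝ) → ℝ) : ℝ → (Fin 3 → ℝ) → ℝ :=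
  fun t x => deriv (fun s => ψ s x) t

/-- `ℤ³`-periodicity of a function on `ℝ³`. -/
def ZPeriodic (f : (Fin 3 → ℝ) → ℝ) : Prop :=
  ∀ (x : Fin 3 → ℝ) (k : Fin 3 → ℤ), f (x + fun i => (k i : ℝ)) = f x

/-- Smoothness of `ψ` on `(0,∞) × ℝ³`. -/
def SmoothOnPos (ψ : ℝ → (Fin 3 → ℝ) → ℝ) : Prop :=
  ContDiffOn ℝ (⊤ : ℕ∞) (fun p : ℝ × (Fin 3 → ℝ) => ψ p.1 p.2)
    {p : ℝ × (Fin 3 → ℝ) | 0 < p.1}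

/-- The unit cube `[0,1]³`, a fundamental domain for `𝕋³`. -/
def cube : Set (Fin 3 → ℝ) := Set.Icc 0 1

/-- The FLRW wave equation `□_g ψ = 0` in coordinates. -/
def FLRWwave (γ : ℝ) (ψ : ℝ → (Fin 3 → ℝ) → ℝ) : Prop :=
  ∀ t : ℝ, 0 < t → ∀ x : Fin 3 → ℝ,
    dtd (dtd ψ) t x + (2 / γ) * t⁻¹ * dtd ψ t x
      - t ^ (-(4 / (3 * γ))) * ∑ i : Fin 3, pd i (pd i (ψ t)) x = 0

/-- The renormalized energy `G_α(t)` of `φ = t^{2/γ−1}ψ` (softest region `2/3 < γ ≤ 4/3`). -/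
def Gren (γ : ℝ) (φ : ℝ → (Fin 3 → ℝ) → ℝ) (α : Fin 3 → ℕ) (t : ℝ) : ℝ :=
  (1 / 2) * ∫ x in cube,
    (t ^ (4 / (3 * γ)) * (dtd (fun s => pdMulti α (φ s)) t x) ^ 2
      + ∑ i : Fin 3, (pd i (pdMulti α (φ t)) x) ^ 2)

open scoped ContDiff

section DirDeriv

variable {E : Type*} [NormedAddCommGroup E] [NormedSpace ℝ E] {U : Set E} {F G : E → ℝ} {p : E}

def dirDeriv (v : E) (F : E → ℝ) : E → ℝ := fun p => fderiv ℝ F p v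

lemma contDiffOn_dirDeriv (hF : ContDiffOn ℝ ∞ F U) (hU : IsOpen U) (v : E) :
    ContDiffOn ℝ ∞ (dirDeriv v F) U :=
  (ContinuousLinearMap.apply ℝ ℝ v).contDiff.comp_contDiffOn
    (hF.fderiv_of_isOpen hU (by exact_mod_cast le_rfl))

lemma contDiffOn_iterate_dirDeriv (hF : ContDiffOn ℝ ∞ F U) (hU : IsOpen U) (v : E) (n : ℕ) :
    ContDiffOn ℝ ∞ ((dirDeriv v)^[n] F) U :=
  Function.Iterate.rec (fun G => ContDiffOn ℝ ∞ G U) hF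
    (fun _ hG => contDiffOn_dirDeriv hG hU v) n

lemma ContDiffOn.differentiableAt_of_isOpen (hF : ContDiffOn ℝ ∞ F U) (hU : IsOpen U)
    (hp : p ∈ U) : DifferentiableAt ℝ F p :=
  (hF.differentiableOn (by simp)).differentiableAt (hU.mem_nhds hp)

lemma dirDeriv_comm (hF : ContDiffOn ℝ ∞ F U) (hU : IsOpen U) (hp : p ∈ U) (v w : E) :
    dirDeriv w (dirDeriv v F) p = dirDeriv v (dirDeriv w F) p := by
  have hFp := hF.contDiffAt (hU.mem_nhds hp)
  have hd : DifferentiableAt ℝ (fderiv ℝ F) p :=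
    (hFp.fderiv_right (m := ∞) (by simp)).differentiableAt (by simp)
  have hsecond : ∀ u z, dirDeriv z (dirDeriv u F) p = fderiv ℝ (fderiv ℝ F) p z u := fun u z => by
    change fderiv ℝ (fun y => fderiv ℝ F y u) p z = _
    simp [fderiv_clm_apply hd (differentiableAt_const u)]
  rw [hsecond, hsecond, (hFp.isSymmSndFDerivAt (by simpa using ENat.LEInfty.out)).eq]

lemma dirDeriv_congr (hU : IsOpen U) (h : Set.EqOn F G U) (hp : p ∈ U) (v : E) :
    dirDeriv v F p = dirDeriv v G p := by
  simp only [dirDeriv, (h.eventuallyEq_of_mem (hU.mem_nhds hp)).fderiv_eq]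

lemma dirDeriv_comm_dirDeriv_dirDeriv (hF : ContDiffOn ℝ ∞ F U) (hU : IsOpen U) (hp : p ∈ U)
    (v w : E) :
    dirDeriv w (dirDeriv v (dirDeriv v F)) p = dirDeriv v (dirDeriv v (dirDeriv w F)) p :=
  (dirDeriv_comm (contDiffOn_dirDeriv hF hU v) hU hp v w).trans
    (dirDeriv_congr hU (fun _ hq => dirDeriv_comm hF hU hq v w) hp v)

lemma dirDeriv_add_right_eq (hU : IsOpen U) {c : E} (h : ∀ q ∈ U, F (q + c) = F q)
    (hp : p ∈ U) (v : E) : dirDeriv v F (p + c) = dirDeriv v F p := by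
  have hshift : (fun q => F (q + c)) =ᶠ[nhds p] F :=
    Filter.eventually_of_mem (hU.mem_nhds hp) h
  simp only [dirDeriv, ← fderiv_comp_add_right, hshift.fderiv_eq]

lemma dirDeriv_add (hF : DifferentiableAt ℝ F p) (hG : DifferentiableAt ℝ G p) (v : E) :
    dirDeriv v (fun q => F q + G q) p = dirDeriv v F p + dirDeriv v G p := by
  simp [dirDeriv, fderiv_fun_add hF hG]

lemma dirDeriv_sub (hF : DifferentiableAt ℝ F p) (hG : DifferentiableAt ℝ G p) (v : E) :
    dirDeriv v (fun q => F q - G q) p = dirDeriv v F p - dirDeriv v G p := by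
  simp [dirDeriv, fderiv_fun_sub hF hG]

lemma dirDeriv_mul (hF : DifferentiableAt ℝ F p) (hG : DifferentiableAt ℝ G p) (v : E) :
    dirDeriv v (fun q => F q * G q) p = dirDeriv v F p * G p + F p * dirDeriv v G p := by
  simp only [dirDeriv, fderiv_fun_mul hF hG, add_apply, smul_apply, smul_eq_mul]
  ring

lemma dirDeriv_sq (hF : DifferentiableAt ℝ F p) (v : E) :
    dirDeriv v (fun q => F q ^ 2) p = 2 * F p * dirDeriv v F p := by
  simp only [sq, dirDeriv_mul hF hF]
  ring

lemma dirDeriv_sum {ι : Type*} {s : Finset ι} {F : ι → E → ℝ}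
    (hF : ∀ i ∈ s, DifferentiableAt ℝ (F i) p) (v : E) :
    dirDeriv v (fun q => ∑ i ∈ s, F i q) p = ∑ i ∈ s, dirDeriv v (F i) p := by
  simp [dirDeriv, fderiv_fun_sum hF]

end DirDeriv

abbrev Spacetime := ℝ × (Fin 3 → ℝ)

def posTime : Set Spacetime := {p | 0 < p.1}

lemma isOpen_posTime : IsOpen posTime := isOpen_lt continuous_const continuous_fst

local notation "∂ₜ" => dirDeriv ((1 : ℝ), (0 : Fin 3 → ℝ))

local notation "∂[" i "]" => dirDeriv ((0 : ℝ), (Pi.single i 1 : Fin 3 → ℝ))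

lemma ZPeriodic.mul {f g : (Fin 3 → ℝ) → ℝ} (hf : ZPeriodic f) (hg : ZPeriodic g) :
    ZPeriodic (fun x => f x * g x) := fun x k => congrArg₂ (· * ·) (hf x k) (hg x k)

lemma pd_eq_fderiv {f : (Fin 3 → ℝ) → ℝ} {x : Fin 3 → ℝ} (hf : DifferentiableAt ℝ f x)
    (i : Fin 3) : pd i f x = fderiv ℝ f x (Pi.single i 1) := by
  have h : HasFDerivAt f (fderiv ℝ f x) (Function.update x i (x i)) := by
    rw [Function.update_eq_self]
    exact hf.hasFDerivAt
  exact (h.comp_hasDerivAt (x i) (hasDerivAt_update x i (x i))).deriv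

-- Divergence theorem for the field `g eᵢ`: its two faces `xᵢ = 0` and `xᵢ = 1` differ by the
-- period `eᵢ`, so their contributions cancel.
lemma integral_pd_eq_zero {g : (Fin 3 → ℝ) → ℝ} (hg : ContDiff ℝ 1 g) (hper : ZPeriodic g)
    (i : Fin 3) : ∫ x in cube, pd i g x = 0 := by
  have hgd : Differentiable ℝ g := hg.differentiable one_ne_zero
  have hflux : ∀ x, ∑ j, (Pi.single i (fderiv ℝ g) : Fin 3 → _) j x (Pi.single j 1) = pd i g x :=
    fun x => by
      rw [Finset.sum_eq_single_of_mem i (Finset.mem_univ i)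
          fun j _ hj => by simp [Pi.single_eq_of_ne hj],
        pd_eq_fderiv (hgd x), Pi.single_eq_same]
  have hdiv := integral_divergence_of_hasFDerivAt_off_countable' (0 : Fin 3 → ℝ) 1
    (fun _ => zero_le_one) (Pi.single i g) (Pi.single i (fderiv ℝ g)) ∅ countable_empty
    (fun j => by
      rcases eq_or_ne j i with rfl | hj
      · simpa using hg.continuous.continuousOn
      · rw [Pi.single_eq_of_ne hj]
        exact continuousOn_const)
    (fun x _ j => by
      rcases eq_or_ne j i with rfl | hj
      · simpa using (hgd x).hasFDerivAt
      · rw [Pi.single_eq_of_ne hj, Pi.single_eq_of_ne hj]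
        exact hasFDerivAt_const (0 : ℝ) x)
    (by
      simp only [hflux, funext fun x => pd_eq_fderiv (hgd x) i]
      exact ((hg.continuous_fderiv one_ne_zero).clm_apply continuous_const).continuousOn
        |>.integrableOn_compact isCompact_Icc)
  have hshift : ∀ y : Fin 2 → ℝ,
      i.insertNth (1 : ℝ) y
        = i.insertNth (0 : ℝ) y + fun k => ((Pi.single i 1 : Fin 3 → ℤ) k : ℝ) :=
    fun y => funext fun k => Fin.succAboveCases i (by simp) (fun l => by simp) k
  change ∫ x in Icc 0 1, pd i g x = 0
  rw [← funext hflux, hdiv]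
  refine Finset.sum_eq_zero fun j _ => ?_
  rcases eq_or_ne j i with rfl | hj
  · simp only [Pi.single_eq_same, Pi.one_apply, Pi.zero_apply, hshift,
      fun y => hper (j.insertNth 0 y) (Pi.single j 1), sub_self]
  · simp [Pi.single_eq_of_ne hj]

lemma contDiffOn_rpow_fst (c : ℝ) : ContDiffOn ℝ ∞ (fun q : Spacetime => q.1 ^ c) posTime :=
  fun _ hp =>
    ((Real.contDiffAt_rpow_const_of_ne (ne_of_gt hp)).comp _ contDiffAt_fst).contDiffWithinAt

lemma differentiableAt_fst_mul {F : Spacetime → ℝ} {p : Spacetime} {f : ℝ → ℝ}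
    (hf : DifferentiableAt ℝ f p.1) (hF : DifferentiableAt ℝ F p) :
    DifferentiableAt ℝ (fun q => f q.1 * F q) p :=
  (hf.comp p differentiableAt_fst).mul hF

lemma dirDeriv_fst_mul {F : Spacetime → ℝ} {p : Spacetime} {f : ℝ → ℝ} {f' : ℝ}
    (hf : HasDerivAt f f' p.1) (hF : DifferentiableAt ℝ F p) (v : Spacetime) :
    dirDeriv v (fun q => f q.1 * F q) p = f' * v.1 * F p + f p.1 * dirDeriv v F p := by
  have hfst : HasFDerivAt (fun q : Spacetime => f q.1) (f' • ContinuousLinearMap.fst ℝ ℝ _) p :=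
    hf.comp_hasFDerivAt p hasFDerivAt_fst
  rw [dirDeriv_mul hfst.differentiableAt hF, dirDeriv, hfst.fderiv]
  simp

lemma dirDeriv_dirDeriv_fst_mul {F : Spacetime → ℝ} {p : Spacetime} {f f' f'' : ℝ → ℝ}
    (hf : ∀ s, 0 < s → HasDerivAt f (f' s) s) (hf' : ∀ s, 0 < s → HasDerivAt f' (f'' s) s)
    (hF : ContDiffOn ℝ ∞ F posTime) (hp : p ∈ posTime) (v : Spacetime) :
    dirDeriv v (dirDeriv v (fun q => f q.1 * F q)) p
      = f'' p.1 * v.1 ^ 2 * F p + 2 * f' p.1 * v.1 * dirDeriv v F p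
        + f p.1 * dirDeriv v (dirDeriv v F) p := by
  have hd : ∀ {G : Spacetime → ℝ}, ContDiffOn ℝ ∞ G posTime → DifferentiableAt ℝ G p :=
    fun hG => hG.differentiableAt_of_isOpen isOpen_posTime hp
  have hvF := contDiffOn_dirDeriv hF isOpen_posTime v
  have hfirst : EqOn (dirDeriv v (fun q => f q.1 * F q))
      (fun q => f' q.1 * v.1 * F q + f q.1 * dirDeriv v F q) posTime := fun q hq =>
    dirDeriv_fst_mul (hf q.1 hq) (hF.differentiableAt_of_isOpen isOpen_posTime hq) v
  rw [dirDeriv_congr isOpen_posTime hfirst hp,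
    dirDeriv_add (differentiableAt_fst_mul ((hf' p.1 hp).mul_const v.1).differentiableAt (hd hF))
      (differentiableAt_fst_mul (hf p.1 hp).differentiableAt (hd hvF)),
    dirDeriv_fst_mul (f := fun s => f' s * v.1) ((hf' p.1 hp).mul_const v.1) (hd hF),
    dirDeriv_fst_mul (hf p.1 hp) (hd hvF)]
  ring

section Slices

variable {F G : Spacetime → ℝ} {t : ℝ}

lemma contDiff_slice (hF : ContDiffOn ℝ ∞ F posTime) (ht : 0 < t) :
    ContDiff ℝ ∞ (fun x => F (t, x)) :=
  contDiff_iff_contDiffAt.2 fun x =>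
    (hF.contDiffAt (isOpen_posTime.mem_nhds (show (t, x) ∈ posTime from ht))).comp x
      (contDiffAt_const.prodMk contDiffAt_id)

lemma hasDerivAt_slice_time (hF : ContDiffOn ℝ ∞ F posTime) (ht : 0 < t) (x : Fin 3 → ℝ) :
    HasDerivAt (fun s => F (s, x)) (∂ₜ F (t, x)) t :=
  (hF.differentiableAt_of_isOpen isOpen_posTime (show (t, x) ∈ posTime from ht)).hasFDerivAt
    |>.comp_hasDerivAt t ((hasDerivAt_id t).prodMk (hasDerivAt_const t x))

lemma pd_slice (hF : ContDiffOn ℝ ∞ F posTime) (ht : 0 < t) (x : Fin 3 → ℝ) (i : Fin 3) :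
    pd i (fun y => F (t, y)) x = ∂[i] F (t, x) := by
  have hFx := (hF.differentiableAt_of_isOpen isOpen_posTime
    (show (t, x) ∈ posTime from ht)).hasFDerivAt.comp x (hasFDerivAt_prodMk_right t x)
  change pd i (F ∘ Prod.mk t) x = _
  rw [pd_eq_fderiv hFx.differentiableAt, hFx.fderiv]
  rfl

lemma iterate_pd_slice (hF : ContDiffOn ℝ ∞ F posTime) (ht : 0 < t) (i : Fin 3) (n : ℕ) :
    (pd i)^[n] (fun x => F (t, x)) = fun x => (∂[i])^[n] F (t, x) := by
  induction n with
  | zero => rfl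
  | succ n ih =>
    rw [Function.iterate_succ_apply', ih, Function.iterate_succ_apply']
    funext x
    exact pd_slice (contDiffOn_iterate_dirDeriv hF isOpen_posTime _ n) ht x i

lemma zPeriodic_dirDeriv_slice (hper : ∀ s, 0 < s → ZPeriodic (fun x => F (s, x)))
    (v : Spacetime) (ht : 0 < t) : ZPeriodic (fun x => dirDeriv v F (t, x)) := fun x k => by
  have hshift := dirDeriv_add_right_eq (F := F) (c := ((0 : ℝ), fun i => (k i : ℝ))) isOpen_posTime
    (fun ⟨s, y⟩ hs => by simpa using hper s hs y k) (show (t, x) ∈ posTime from ht) v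
  change dirDeriv v F (t, x + _) = dirDeriv v F (t, x)
  simpa using hshift

lemma measurableSet_cube : MeasurableSet cube := measurableSet_Icc

lemma integrableOn_cube_slice (hG : ContDiffOn ℝ ∞ G posTime) (ht : 0 < t) :
    IntegrableOn (fun x => G (t, x)) cube :=
  (contDiff_slice hG ht).continuous.continuousOn.integrableOn_compact isCompact_Icc

lemma hasDerivAt_integral_cube (hG : ContDiffOn ℝ ∞ G posTime) (ht : 0 < t) :
    HasDerivAt (fun s => ∫ x in cube, G (s, x)) (∫ x in cube, ∂ₜ G (t, x)) t := by
  have hK : Icc (t / 2) (2 * t) ×ˢ cube ⊆ posTime := fun q hq =>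
    show 0 < q.1 by linarith [hq.1.1]
  obtain ⟨C, hC⟩ := (isCompact_Icc.prod isCompact_Icc).exists_bound_of_continuousOn
    ((contDiffOn_dirDeriv hG isOpen_posTime ((1 : ℝ), (0 : Fin 3 → ℝ))).continuousOn.mono hK)
  refine (hasDerivAt_integral_of_dominated_loc_of_deriv_le (μ := volume.restrict cube)
    (F := fun s x => G (s, x)) (F' := fun s x => ∂ₜ G (s, x)) (bound := fun _ => C)
    (Icc_mem_nhds (show t / 2 < t by linarith) (show t < 2 * t by linarith)) ?_
    (integrableOn_cube_slice hG ht)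
    (contDiff_slice (contDiffOn_dirDeriv hG isOpen_posTime _) ht).continuous.aestronglyMeasurable
    ?_ (integrableOn_const isCompact_Icc.measure_lt_top.ne) ?_).2
  · filter_upwards [eventually_gt_nhds ht] with s hs
    exact (contDiff_slice hG hs).continuous.aestronglyMeasurable
  · exact ae_restrict_of_forall_mem measurableSet_cube fun x hx s hs => hC (s, x) ⟨hs, hx⟩
  · exact ae_restrict_of_forall_mem measurableSet_cube fun x _ s hs =>
      hasDerivAt_slice_time hG (by linarith [hs.1]) x

lemma integral_cube_dirDeriv_space (hG : ContDiffOn ℝ ∞ G posTime)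
    (hper : ZPeriodic (fun x => G (t, x))) (ht : 0 < t) (i : Fin 3) :
    ∫ x in cube, ∂[i] G (t, x) = 0 := by
  simp_rw [← pd_slice hG ht]
  exact integral_pd_eq_zero ((contDiff_slice hG ht).of_le (by simp)) hper i

end Slices

def energyDensity (a : ℝ) (F : Spacetime → ℝ) (p : Spacetime) : ℝ :=
  p.1 ^ a * ∂ₜ F p ^ 2 + ∑ i, ∂[i] F p ^ 2

def energy (a : ℝ) (F : Spacetime → ℝ) (t : ℝ) : ℝ :=
  1 / 2 * ∫ x in cube, energyDensity a F (t, x)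

lemma contDiffOn_energyDensity {F : Spacetime → ℝ} (hF : ContDiffOn ℝ ∞ F posTime) (a : ℝ) :
    ContDiffOn ℝ ∞ (energyDensity a F) posTime :=
  ((contDiffOn_rpow_fst a).mul ((contDiffOn_dirDeriv hF isOpen_posTime _).pow 2)).add
    (ContDiffOn.sum fun _ _ => (contDiffOn_dirDeriv hF isOpen_posTime _).pow 2)

def dirDerivMulti (α : Fin 3 → ℕ) (F : Spacetime → ℝ) : Spacetime → ℝ :=
  (∂[0])^[α 0] ((∂[1])^[α 1] ((∂[2])^[α 2] F))

structure IsPeriodicSolution (a b : ℝ) (F : Spacetime → ℝ) : Prop where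
  smooth : ContDiffOn ℝ ∞ F posTime
  periodic : ∀ t, 0 < t → ZPeriodic (fun x => F (t, x))
  wave : ∀ p ∈ posTime,
    ∂ₜ (∂ₜ F) p + b * p.1⁻¹ * ∂ₜ F p - p.1 ^ (-a) * ∑ i, ∂[i] (∂[i] F) p = 0

lemma isPeriodicSolution_of_FLRWwave {γ : ℝ} {ψ : ℝ → (Fin 3 → ℝ) → ℝ}
    (hsmooth : SmoothOnPos ψ) (hper : ∀ t, 0 < t → ZPeriodic (ψ t)) (hwave : FLRWwave γ ψ) :
    IsPeriodicSolution (4 / (3 * γ)) (2 / γ) (fun p => ψ p.1 p.2) where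
  smooth := hsmooth
  periodic := hper
  wave := by
    rintro ⟨t, x⟩ (ht : 0 < t)
    have hΨ : ContDiffOn ℝ ∞ (fun p : Spacetime => ψ p.1 p.2) posTime := hsmooth
    have hdt : ∀ s, 0 < s → dtd ψ s x = ∂ₜ (fun p : Spacetime => ψ p.1 p.2) (s, x) :=
      fun s hs => (hasDerivAt_slice_time hΨ hs x).deriv
    have htt : dtd (dtd ψ) t x = ∂ₜ (∂ₜ (fun p : Spacetime => ψ p.1 p.2)) (t, x) := by
      rw [dtd, Filter.EventuallyEq.deriv_eq (Filter.eventually_of_mem (Ioi_mem_nhds ht) hdt)]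
      exact (hasDerivAt_slice_time (contDiffOn_dirDeriv hΨ isOpen_posTime _) ht x).deriv
    have hxx : ∀ i, pd i (pd i (ψ t)) x = ∂[i] (∂[i] (fun p : Spacetime => ψ p.1 p.2)) (t, x) :=
      fun i => by
        rw [show pd i (ψ t) = fun y => ∂[i] (fun p : Spacetime => ψ p.1 p.2) (t, y) from
          funext fun y => pd_slice hΨ ht y i]
        exact pd_slice (contDiffOn_dirDeriv hΨ isOpen_posTime _) ht x i
    simpa [htt, hdt t ht, hxx] using hwave t ht x

namespace IsPeriodicSolution

variable {a b : ℝ} {F : Spacetime → ℝ}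

lemma dirDeriv_space (h : IsPeriodicSolution a b F) (i : Fin 3) :
    IsPeriodicSolution a b (∂[i] F) where
  smooth := contDiffOn_dirDeriv h.smooth isOpen_posTime _
  periodic _ ht := zPeriodic_dirDeriv_slice h.periodic _ ht
  wave p hp := by
    have hd : ∀ {G : Spacetime → ℝ}, ContDiffOn ℝ ∞ G posTime → DifferentiableAt ℝ G p :=
      fun hG => hG.differentiableAt_of_isOpen isOpen_posTime hp
    have hder : ∀ v, ContDiffOn ℝ ∞ (dirDeriv v F) posTime :=
      contDiffOn_dirDeriv h.smooth isOpen_posTime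
    have hp' : p.1 ≠ 0 := ne_of_gt hp
    have hinv := (hasDerivAt_inv hp').const_mul b
    have hpow := Real.hasDerivAt_rpow_const (p := -a) (Or.inl hp')
    have hA : DifferentiableAt ℝ (∂ₜ (∂ₜ F)) p :=
      hd (contDiffOn_dirDeriv (hder _) isOpen_posTime _)
    have hB : DifferentiableAt ℝ (∂ₜ F) p := hd (hder _)
    have hDD : ∀ j : Fin 3, ContDiffOn ℝ ∞ (∂[j] (∂[j] F)) posTime := fun j =>
      contDiffOn_dirDeriv (hder _) isOpen_posTime _
    have hS : DifferentiableAt ℝ (fun q => ∑ j, ∂[j] (∂[j] F) q) p :=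
      hd (ContDiffOn.sum fun j _ => hDD j)
    have hBt := differentiableAt_fst_mul hinv.differentiableAt hB
    have hSt := differentiableAt_fst_mul hpow.differentiableAt hS
    have hwave_deriv : ∂[i] (fun q => ∂ₜ (∂ₜ F) q + b * q.1⁻¹ * ∂ₜ F q
        - q.1 ^ (-a) * ∑ j, ∂[j] (∂[j] F) q) p = 0 :=
      (dirDeriv_congr isOpen_posTime (fun q hq => h.wave q hq) hp _).trans (by simp [dirDeriv])
    rw [dirDeriv_sub (hA.fun_add hBt) hSt, dirDeriv_add hA hBt, dirDeriv_fst_mul hinv hB,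
      dirDeriv_fst_mul hpow hS, dirDeriv_sum fun j _ => hd (hDD j),
      dirDeriv_comm_dirDeriv_dirDeriv h.smooth isOpen_posTime hp,
      dirDeriv_comm h.smooth isOpen_posTime hp] at hwave_deriv
    rw [Finset.sum_congr rfl fun j _ =>
      dirDeriv_comm_dirDeriv_dirDeriv h.smooth isOpen_posTime hp _ _] at hwave_deriv
    simpa using hwave_deriv

lemma dirDerivMulti (h : IsPeriodicSolution a b F) (α : Fin 3 → ℕ) :
    IsPeriodicSolution a b (dirDerivMulti α F) := by
  have hiter : ∀ {G} (i : Fin 3) (n : ℕ), IsPeriodicSolution a b G →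
      IsPeriodicSolution a b ((∂[i])^[n] G) := fun i n hG =>
    Function.Iterate.rec (IsPeriodicSolution a b) hG (fun _ hH => hH.dirDeriv_space i) n
  exact hiter 0 _ (hiter 1 _ (hiter 2 _ h))

lemma rpow_mul (h : IsPeriodicSolution a b F) :
    IsPeriodicSolution a (2 - b) (fun q => q.1 ^ (b - 1) * F q) where
  smooth := (contDiffOn_rpow_fst _).mul h.smooth
  periodic t ht x k := by simp only [h.periodic t ht x k]
  wave p hp := by
    have hpow : ∀ c, ∀ s : ℝ, 0 < s → HasDerivAt (fun s => s ^ c) (c * s ^ (c - 1)) s :=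
      fun c s hs => Real.hasDerivAt_rpow_const (Or.inl (ne_of_gt hs))
    have hpow' : ∀ s : ℝ, 0 < s → HasDerivAt (fun s => (b - 1) * s ^ (b - 1 - 1))
        ((b - 1) * ((b - 1 - 1) * s ^ (b - 1 - 1 - 1))) s :=
      fun s hs => (hpow _ s hs).const_mul _
    have hp' : p.1 ≠ 0 := ne_of_gt hp
    rw [dirDeriv_dirDeriv_fst_mul (hpow _) hpow' h.smooth hp,
      dirDeriv_fst_mul (hpow _ _ hp) (h.smooth.differentiableAt_of_isOpen isOpen_posTime hp),
      Finset.sum_congr rfl fun j _ => dirDeriv_dirDeriv_fst_mul (hpow _) hpow' h.smooth hp _]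
    simp only [ne_eq, OfNat.ofNat_ne_zero, not_false_eq_true, zero_pow, one_pow, mul_zero,
      zero_mul, mul_one, zero_add]
    rw [← Finset.mul_sum, Real.rpow_sub_one hp' (b - 1 - 1), Real.rpow_sub_one hp' (b - 1)]
    linear_combination p.1 ^ (b - 1) * h.wave p hp

lemma dirDeriv_time_energyDensity (h : IsPeriodicSolution a b F) {p : Spacetime}
    (hp : p ∈ posTime) :
    ∂ₜ (energyDensity a F) p
      = (a - 2 * b) * p.1 ^ (a - 1) * ∂ₜ F p ^ 2
        + 2 * ∑ i, ∂[i] (fun q => ∂ₜ F q * ∂[i] F q) p := by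
  have hd : ∀ v, DifferentiableAt ℝ (dirDeriv v F) p := fun v =>
    (contDiffOn_dirDeriv h.smooth isOpen_posTime v).differentiableAt_of_isOpen isOpen_posTime hp
  have hp' : p.1 ≠ 0 := ne_of_gt hp
  have hpow := Real.hasDerivAt_rpow_const (p := a) (Or.inl hp')
  have hflux : ∀ i, ∂ₜ (fun q => ∂[i] F q ^ 2) p
      = 2 * ∂[i] (fun q => ∂ₜ F q * ∂[i] F q) p - 2 * ∂ₜ F p * ∂[i] (∂[i] F) p := fun i => by
    rw [dirDeriv_sq (hd _), dirDeriv_mul (hd _) (hd _), dirDeriv_comm h.smooth isOpen_posTime hp]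
    ring
  have hinv : p.1 ^ a * p.1 ^ (-a) = 1 := by
    rw [Real.rpow_neg (le_of_lt hp), mul_inv_cancel₀ (Real.rpow_pos_of_pos hp a).ne']
  change ∂ₜ (fun q => q.1 ^ a * ∂ₜ F q ^ 2 + ∑ i, ∂[i] F q ^ 2) p = _
  rw [dirDeriv_add (differentiableAt_fst_mul hpow.differentiableAt ((hd _).fun_pow 2))
      (DifferentiableAt.fun_sum fun i _ => (hd _).fun_pow 2),
    dirDeriv_fst_mul hpow ((hd _).fun_pow 2), dirDeriv_sq (hd _),
    dirDeriv_sum fun i _ => (hd _).fun_pow 2, Finset.sum_congr rfl fun i _ => hflux i,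
    Finset.sum_sub_distrib, ← Finset.mul_sum, ← Finset.mul_sum, Real.rpow_sub_one hp']
  linear_combination (2 * p.1 ^ a * ∂ₜ F p) * h.wave p hp
    + (2 * ∂ₜ F p * ∑ i, ∂[i] (∂[i] F) p) * hinv

lemma hasDerivAt_energy (h : IsPeriodicSolution a b F) {t : ℝ} (ht : 0 < t) :
    HasDerivAt (energy a F) ((a / 2 - b) * t ^ (a - 1) * ∫ x in cube, ∂ₜ F (t, x) ^ 2) t := by
  have hder : ∀ v, ContDiffOn ℝ ∞ (dirDeriv v F) posTime :=
    contDiffOn_dirDeriv h.smooth isOpen_posTime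
  have hflux : ∀ i : Fin 3, ContDiffOn ℝ ∞ (fun q => ∂ₜ F q * ∂[i] F q) posTime :=
    fun i => (hder _).mul (hder _)
  have hflux_per : ∀ i : Fin 3, ZPeriodic (fun x => ∂ₜ F (t, x) * ∂[i] F (t, x)) := fun i =>
    (zPeriodic_dirDeriv_slice h.periodic _ ht).mul (zPeriodic_dirDeriv_slice h.periodic _ ht)
  have hE := (hasDerivAt_integral_cube (contDiffOn_energyDensity h.smooth a) ht).const_mul
    (1 / 2 : ℝ)
  refine hE.congr_deriv ?_
  rw [setIntegral_congr_fun measurableSet_cube fun x _ =>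
      h.dirDeriv_time_energyDensity (show (t, x) ∈ posTime from ht)]
  dsimp only
  rw [integral_add ((integrableOn_cube_slice ((hder _).pow 2) ht).const_mul _)
      ((integrable_finsetSum _ fun i _ => integrableOn_cube_slice
        (contDiffOn_dirDeriv (hflux i) isOpen_posTime _) ht).const_mul _),
    integral_const_mul, integral_const_mul,
    integral_finsetSum _ fun i _ => integrableOn_cube_slice
        (contDiffOn_dirDeriv (hflux i) isOpen_posTime _) ht]
  simp only [integral_cube_dirDeriv_space (hflux _) (hflux_per _) ht]
  ring

lemma energy_monotoneOn (h : IsPeriodicSolution a b F) (hab : 2 * b ≤ a) :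
    MonotoneOn (energy a F) (Ioi 0) := by
  refine monotoneOn_of_hasDerivWithinAt_nonneg (convex_Ioi 0)
    (fun t ht => (h.hasDerivAt_energy ht).continuousAt.continuousWithinAt)
    (fun t ht => (h.hasDerivAt_energy (interior_subset ht : (0 : ℝ) < t)).hasDerivWithinAt)
    fun t ht => ?_
  have ht : (0 : ℝ) < t := interior_subset ht
  have hcoef : 0 ≤ a / 2 - b := by linarith
  have hint : 0 ≤ ∫ x in cube, ∂ₜ F (t, x) ^ 2 :=
    setIntegral_nonneg measurableSet_cube fun _ _ => sq_nonneg _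
  have := Real.rpow_pos_of_pos ht (a - 1)
  positivity

end IsPeriodicSolution

lemma Gren_eq_energy {F : Spacetime → ℝ} (hF : ContDiffOn ℝ ∞ F posTime) (γ : ℝ)
    (α : Fin 3 → ℕ) {t : ℝ} (ht : 0 < t) :
    Gren γ (fun s x => F (s, x)) α t = energy (4 / (3 * γ)) (dirDerivMulti α F) t := by
  have hiter := fun {G : Spacetime → ℝ} (hG : ContDiffOn ℝ ∞ G posTime) i n =>
    contDiffOn_iterate_dirDeriv hG isOpen_posTime ((0 : ℝ), (Pi.single i 1 : Fin 3 → ℝ)) n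
  have hG : ContDiffOn ℝ ∞ (dirDerivMulti α F) posTime := hiter (hiter (hiter hF 2 _) 1 _) 0 _
  have hslice : ∀ s, 0 < s →
      pdMulti α (fun x => F (s, x)) = fun x => dirDerivMulti α F (s, x) := fun s hs => by
    rw [pdMulti, iterate_pd_slice hF hs, iterate_pd_slice (hiter hF 2 _) hs,
      iterate_pd_slice (hiter (hiter hF 2 _) 1 _) hs, dirDerivMulti]
  refine congrArg _ (setIntegral_congr_fun measurableSet_cube fun x _ => ?_)
  have htime : dtd (fun s => pdMulti α (fun x => F (s, x))) t x
      = ∂ₜ (dirDerivMulti α F) (t, x) := by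
    rw [dtd, Filter.EventuallyEq.deriv_eq (Filter.eventually_of_mem (Ioi_mem_nhds ht)
      fun s hs => congrFun (hslice s hs) x)]
    exact (hasDerivAt_slice_time hG ht x).deriv
  simp only [energyDensity, htime, hslice t ht, pd_slice hG ht]

theorem flrw_renormalized_energy_soft_general
    (γ t₀ : ℝ) (hγ1 : 2 / 3 < γ) (hγ3 : γ ≤ 4 / 3)
    (ψ : ℝ → (Fin 3 → ℝ) → ℝ)
    (hsmooth : SmoothOnPos ψ)
    (hper : ∀ t : ℝ, 0 < t → ZPeriodic (ψ t))
    (hwave : FLRWwave γ ψ) :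
    ∀ α : Fin 3 → ℕ, ∀ t ∈ Set.Ioc (0 : ℝ) t₀,
      Gren γ (fun s x => s ^ (2 / γ - 1) * ψ s x) α t
        ≤ Gren γ (fun s x => s ^ (2 / γ - 1) * ψ s x) α t₀ := by
  intro α t ht
  have hφ := (isPeriodicSolution_of_FLRWwave hsmooth hper hwave).rpow_mul
  have hsoft : 2 * (2 - 2 / γ) ≤ 4 / (3 * γ) := by
    have hγ : 0 < γ := by linarith
    have hexpand : 2 * (2 - 2 / γ) * (3 * γ) = 12 * γ - 12 := by field_simp; ring
    rw [le_div_iff₀ (by positivity), hexpand]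
    linarith
  have ht₀ : 0 < t₀ := ht.1.trans_le ht.2
  calc Gren γ (fun s x => s ^ (2 / γ - 1) * ψ s x) α t
      = energy (4 / (3 * γ)) (dirDerivMulti α _) t := Gren_eq_energy hφ.smooth γ α ht.1
    _ ≤ energy (4 / (3 * γ)) (dirDerivMulti α _) t₀ :=
      (hφ.dirDerivMulti α).energy_monotoneOn hsoft ht.1 ht₀ ht.2
    _ = Gren γ (fun s x => s ^ (2 / γ - 1) * ψ s x) α t₀ :=
      (Gren_eq_energy hφ.smooth γ α ht₀).symm

/-- **Proposition 2, softest region (FLRW, `2/3 < γ ≤ 4/3`).** Renormalized energy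
monotonicity `G_α(t) ≤ G_α(t₀)` for `φ = t^{2/γ−1} ψ`. -/
theorem flrw_renormalized_energy_soft
    (γ t₀ : ℝ) (hγ1 : 2 / 3 < γ) (hγ2 : γ < 2) (hγ3 : γ ≤ 4 / 3) (ht₀ : 0 < t₀)
    (ψ : ℝ → (Fin 3 → ℝ) → ℝ)
    (hsmooth : SmoothOnPos ψ)
    (hper : ∀ t : ℝ, 0 < t → ZPeriodic (ψ t))
    (hwave : FLRWwave γ ψ) :
    ∀ α : Fin 3 → ℕ, ∀ t ∈ Set.Ioc (0 : ℝ) t₀,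
      Gren γ (fun s x => s ^ (2 / γ - 1) * ψ s x) α t
        ≤ Gren γ (fun s x => s ^ (2 / γ - 1) * ψ s x) α t₀ :=
  flrw_renormalized_energy_soft_general γ t₀ hγ1 hγ3 ψ hsmooth hper hwave
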